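/- arXiv:2412.17036 — 4 statements merged into one kernel-verified Lean document; each statement's English description precedes it below -/
import Mathlib

section
/- Let a, b, c be integers and set d := b² − 4ac. Then the following are equivalent: (i) there exist integers x, y with ax² + bxy + cy² = −1; (ii) the binary quadratic form ax² + bxy + cy² is GL(2,ℤ)-equivalent to the form −x² + (d/4)y² if b is even, and to the form −x² + xy + ((d−1)/4)y² if b is odd. Here GL(2,ℤ)-equivalence of two binary quadratic forms Q and Q' means that there exist integers p, q, r, s with ps − qr = ±1 such that Q(px + qy, rx + sy) = Q'(x, y) for all integers x, y. -/
/-!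
If `Q(X, Y) = -1`, then `X` and `Y` are coprime (`-1 = X (aX + bY) + cY²`), so `(X, Y)` is the
first column of a matrix in `SL(2,ℤ)`, and the substituted form has leading coefficient `-1`.
Adding `t` times the first column to the second changes the middle coefficient by `-2t`, which
brings it to `b % 2`; the last coefficient is then forced by invariance of the discriminant.
-/

def binQuadForm (a b c x y : ℤ) : ℤ := a * x ^ 2 + b * x * y + c * y ^ 2

def binPolarForm (a b c x y x' y' : ℤ) : ℤ :=
  2 * a * x * x' + b * (x * y' + x' * y) + 2 * c * y * y'

section BinaryQuadraticForm

variable (a b c : ℤ)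

theorem binQuadForm_linear_subst (p q r s x y : ℤ) :
    binQuadForm a b c (p * x + q * y) (r * x + s * y) =
      binQuadForm (binQuadForm a b c p r) (binPolarForm a b c p r q s) (binQuadForm a b c q s)
        x y := by
  unfold binQuadForm binPolarForm; ring

theorem discr_linear_subst (p q r s : ℤ) :
    binPolarForm a b c p r q s ^ 2 - 4 * binQuadForm a b c p r * binQuadForm a b c q s =
      (p * s - q * r) ^ 2 * (b ^ 2 - 4 * a * c) := by
  unfold binQuadForm binPolarForm; ring

theorem binPolarForm_emod_two (p q r s : ℤ) :
    binPolarForm a b c p r q s % 2 = b * (p * s - q * r) % 2 := by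
  rw [show binPolarForm a b c p r q s =
      b * (p * s - q * r) + 2 * (a * p * q + b * q * r + c * r * s) by
    unfold binPolarForm; ring, Int.add_mul_emod_self_left]

theorem binPolarForm_add_smul_left (x y x' y' t : ℤ) :
    binPolarForm a b c x y (x' + t * x) (y' + t * y) =
      binPolarForm a b c x y x' y' + 2 * t * binQuadForm a b c x y := by
  unfold binQuadForm binPolarForm; ring

theorem exists_unimodular_polar_eq_emod_two {X Y : ℤ} (h : binQuadForm a b c X Y = -1) :
    ∃ q s, X * s - q * Y = 1 ∧ binPolarForm a b c X Y q s = b % 2 := by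
  set q₀ := c * Y
  set s₀ := -(a * X + b * Y)
  have hdet₀ : X * s₀ - q₀ * Y = 1 := by unfold binQuadForm at h; linear_combination -h
  set t := binPolarForm a b c X Y q₀ s₀ / 2
  refine ⟨q₀ + t * X, s₀ + t * Y, by linear_combination hdet₀, ?_⟩
  have hpolar₀ := binPolarForm_emod_two a b c X q₀ Y s₀
  rw [hdet₀, mul_one] at hpolar₀
  rw [binPolarForm_add_smul_left, h]
  omega

end BinaryQuadraticForm

/-- A binary quadratic form `ax² + bxy + cy²` represents `-1` if and only if it
is `GL(2,ℤ)`-equivalent to `-x² + (d/4)y²` when `b` is even, and to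
`-x² + xy + ((d-1)/4)y²` when `b` is odd, where `d = b² - 4ac` is the
discriminant. -/
theorem represents_neg_one_iff_equiv (a b c d : ℤ) (hd : d = b ^ 2 - 4 * a * c) :
    (∃ x y : ℤ, a * x ^ 2 + b * x * y + c * y ^ 2 = -1) ↔
      (∃ p q r s : ℤ, (p * s - q * r = 1 ∨ p * s - q * r = -1) ∧
        ∀ x y : ℤ,
          a * (p * x + q * y) ^ 2 + b * (p * x + q * y) * (r * x + s * y) +
              c * (r * x + s * y) ^ 2 =
            if 2 ∣ b then -x ^ 2 + (d / 4) * y ^ 2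
            else -x ^ 2 + x * y + ((d - 1) / 4) * y ^ 2) := by
  constructor
  · rintro ⟨X, Y, hXY⟩
    replace hXY : binQuadForm a b c X Y = -1 := hXY
    obtain ⟨q, s, hdet, hpolar⟩ := exists_unimodular_polar_eq_emod_two a b c hXY
    refine ⟨X, q, Y, s, Or.inl hdet, fun x y => ?_⟩
    refine (binQuadForm_linear_subst a b c X q Y s x y).trans ?_
    have hdiscr := discr_linear_subst a b c X q Y s
    set K := binQuadForm a b c q s
    rw [hXY, hpolar] at hdiscr ⊢
    rw [hdet, ← hd] at hdiscr
    rcases Int.emod_two_eq_zero_or_one b with hb | hb <;> rw [hb] at hdiscr ⊢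
    · rw [if_pos (by omega), show d / 4 = K by omega]; unfold binQuadForm; ring
    · rw [if_neg (by omega), show (d - 1) / 4 = K by omega]; unfold binQuadForm; ring
  · rintro ⟨p, q, r, s, -, hequiv⟩
    refine ⟨p, r, ?_⟩
    have h10 := hequiv 1 0
    split_ifs at h10 <;> linear_combination h10
end

section
/- Let a, b, c, N be integers with N < 0, and suppose the discriminant Δ := b² − 4ac is positive and is not the square of an integer. Let Q(x,y) := ax² + bxy + cy², and for vectors v = (v₁,v₂), w = (w₁,w₂) let B(v,w) := 2a·v₁w₁ + b·(v₁w₂ + v₂w₁) + 2c·v₂w₂ denote the associated (doubled) bilinear pairing. If there exists (x₀,y₀) ∈ ℤ² with Q(x₀,y₀) = N, then there exists (x₁,y₁) ∈ ℤ² with Q(x₁,y₁) = N, (x₁,y₁) ≠ (x₀,y₀), (x₁,y₁) ≠ (−x₀,−y₀), and B((x₀,y₀),(x₁,y₁)) > 0. -/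
/-!
A solution `t² - Δu² = 1` of Pell's equation, which exists because `Δ > 0` is not a square, gives
an automorph `M` of `Q` with `B(v, Mv) = 2t·Q(v)`. Taking `t < -1`, the point `Mv` represents `N`,
pairs positively with `v` since `N < 0`, and differs from `±v` because `B(v, ±v) = ±2Q(v)`
would force `t = ±1`.
-/

section BinaryQuadraticForm

variable {R : Type*} [CommRing R] (a b c : R)

def binaryQuadForm (v : R × R) : R :=
  a * v.1 ^ 2 + b * v.1 * v.2 + c * v.2 ^ 2

def binaryPolarForm (v w : R × R) : R :=
  2 * a * v.1 * w.1 + b * (v.1 * w.2 + v.2 * w.1) + 2 * c * v.2 * w.2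

/-- The classical automorph attached to `(t, u)`: its matrix `!![t - b*u, -2*c*u; 2*a*u, t + b*u]`
has trace `2t` and determinant `t² - (b² - 4ac)u²`. -/
def pellAutomorph (t u : R) (v : R × R) : R × R :=
  ((t - b * u) * v.1 - 2 * c * u * v.2, 2 * a * u * v.1 + (t + b * u) * v.2)

theorem binaryQuadForm_pellAutomorph (t u : R) (v : R × R) :
    binaryQuadForm a b c (pellAutomorph a b c t u v)
      = (t ^ 2 - (b ^ 2 - 4 * a * c) * u ^ 2) * binaryQuadForm a b c v := by
  simp only [binaryQuadForm, pellAutomorph]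
  ring

theorem binaryPolarForm_pellAutomorph (t u : R) (v : R × R) :
    binaryPolarForm a b c v (pellAutomorph a b c t u v) = 2 * t * binaryQuadForm a b c v := by
  simp only [binaryPolarForm, binaryQuadForm, pellAutomorph]
  ring

theorem binaryPolarForm_self (v : R × R) :
    binaryPolarForm a b c v v = 2 * binaryQuadForm a b c v := by
  simp only [binaryPolarForm, binaryQuadForm]
  ring

theorem binaryPolarForm_neg_right (v w : R × R) :
    binaryPolarForm a b c v (-w) = -binaryPolarForm a b c v w := by
  simp only [binaryPolarForm, Prod.fst_neg, Prod.snd_neg]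
  ring

end BinaryQuadraticForm

theorem Pell.exists_lt_neg_one_of_not_isSquare {d : ℤ} (hd : 0 < d) (hsq : ¬IsSquare d) :
    ∃ t u : ℤ, t ^ 2 - d * u ^ 2 = 1 ∧ t < -1 := by
  obtain ⟨x, u, hxu, hu⟩ := Pell.exists_of_not_isSquare hd hsq
  refine ⟨-|x|, u, by rwa [neg_sq, sq_abs], ?_⟩
  have hdu : 0 < d * u ^ 2 := mul_pos hd (by positivity)
  have h1x : 1 < |x| := by nlinarith [sq_abs x, abs_nonneg x]
  linarith

/-- If a binary quadratic form `Q(x,y) = ax² + bxy + cy²` whose discriminant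
`b² - 4ac` is positive and not a square represents a negative number `N` at
`(x₀,y₀)`, then it represents `N` at another point `(x₁,y₁)`, distinct from
`±(x₀,y₀)`, whose pairing `B((x₀,y₀),(x₁,y₁))` with `(x₀,y₀)` is positive. -/
theorem exists_second_representation (a b c N : ℤ) (hN : N < 0)
    (hΔpos : 0 < b ^ 2 - 4 * a * c)
    (hΔnotsq : ¬ ∃ m : ℤ, m ^ 2 = b ^ 2 - 4 * a * c)
    (x₀ y₀ : ℤ) (h₀ : a * x₀ ^ 2 + b * x₀ * y₀ + c * y₀ ^ 2 = N) :
    ∃ x₁ y₁ : ℤ,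
      a * x₁ ^ 2 + b * x₁ * y₁ + c * y₁ ^ 2 = N ∧
      (x₁, y₁) ≠ (x₀, y₀) ∧
      (x₁, y₁) ≠ (-x₀, -y₀) ∧
      0 < 2 * a * x₀ * x₁ + b * (x₀ * y₁ + y₀ * x₁) + 2 * c * y₀ * y₁ := by
  obtain ⟨t, u, hpell, ht⟩ := Pell.exists_lt_neg_one_of_not_isSquare hΔpos
    fun ⟨m, hm⟩ => hΔnotsq ⟨m, by rw [hm, sq]⟩
  set v : ℤ × ℤ := (x₀, y₀)
  set w := pellAutomorph a b c t u v
  have hQv : binaryQuadForm a b c v = N := h₀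
  have hB : binaryPolarForm a b c v w = 2 * t * N := by
    rw [binaryPolarForm_pellAutomorph, hQv]
  refine ⟨w.1, w.2, ?_, ?_, ?_, ?_⟩
  · change binaryQuadForm a b c w = N
    rw [binaryQuadForm_pellAutomorph, hpell, one_mul, hQv]
  · intro hfix
    rw [Prod.mk.eta] at hfix
    rw [hfix, binaryPolarForm_self, hQv] at hB
    nlinarith
  · intro hneg
    rw [Prod.mk.eta, show (-x₀, -y₀) = -v from rfl] at hneg
    rw [hneg, binaryPolarForm_neg_right, binaryPolarForm_self, hQv] at hB
    nlinarith
  · change 0 < binaryPolarForm a b c v w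
    rw [hB]
    exact mul_pos_of_neg_of_neg (by linarith) hN
end

section
/- Let n ≥ 8 and let Cₙ be the n×n Cartan matrix of type Aₙ. Let β ∈ ℤⁿ be a nonzero vector with all entries nonnegative, and suppose βᵀ Cₙ⁻¹ β < 2. Then β is a standard basis vector e_i with i ∈ {1, 2, n−1, n}; moreover βᵀ Cₙ⁻¹ β = n/(n+1) if i ∈ {1, n}, and βᵀ Cₙ⁻¹ β = (2n−2)/(n+1) if i ∈ {2, n−1}. -/
/-- The `n×n` Cartan matrix of type `Aₙ`: `2` on the diagonal, `-1` on the
super- and subdiagonal, `0` elsewhere. -/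
def cartan (n : ℕ) : Matrix (Fin n) (Fin n) ℚ :=
  Matrix.of fun i j =>
    if i = j then 2 else if ((i : ℤ) - (j : ℤ)).natAbs = 1 then -1 else 0

/-- Entry formula for the inverse Cartan matrix (0-indexed). -/
def mEnt (n a c : ℕ) : ℚ :=
  (((min a c : ℕ) : ℚ) + 1) * ((n : ℚ) - ((max a c : ℕ) : ℚ)) / ((n : ℚ) + 1)

def Minv (n : ℕ) : Matrix (Fin n) (Fin n) ℚ :=
  Matrix.of fun i j => mEnt n (i : ℕ) (j : ℕ)

lemma keyid (n a c : ℕ) (hn : 2 ≤ n) (ha : a < n) (hc : c < n) :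
    2 * mEnt n a c - (if 1 ≤ a then mEnt n (a-1) c else 0)
      - (if a + 1 < n then mEnt n (a+1) c else 0)
      = if a = c then 1 else 0 := by
  have hden : ((n : ℚ) + 1) ≠ 0 := by positivity
  rcases lt_trichotomy a c with h | h | h
  · -- a < c
    by_cases ha0 : 1 ≤ a
    · rw [if_pos ha0, if_pos (by omega : a + 1 < n), if_neg (by omega : ¬ a = c)]
      simp only [mEnt, min_eq_left (by omega : a ≤ c), max_eq_right (by omega : a ≤ c),
        min_eq_left (by omega : a - 1 ≤ c), max_eq_right (by omega : a - 1 ≤ c),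
        min_eq_left (by omega : a + 1 ≤ c), max_eq_right (by omega : a + 1 ≤ c)]
      rw [Nat.cast_sub ha0]
      push_cast
      field_simp
      ring
    · rw [if_neg ha0, if_pos (by omega : a + 1 < n), if_neg (by omega : ¬ a = c)]
      have : a = 0 := by omega
      subst this
      simp only [mEnt, min_eq_left (by omega : 0 ≤ c), max_eq_right (by omega : 0 ≤ c),
        min_eq_left (by omega : 0 + 1 ≤ c), max_eq_right (by omega : 0 + 1 ≤ c)]
      push_cast
      field_simp
      ring
  · -- a = c
    subst h
    rw [if_pos rfl]
    by_cases ha0 : 1 ≤ a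
    · rw [if_pos ha0]
      by_cases htop : a + 1 < n
      · rw [if_pos htop]
        simp only [mEnt, min_self, max_self,
          min_eq_left (by omega : a - 1 ≤ a), max_eq_right (by omega : a - 1 ≤ a),
          min_eq_right (by omega : a ≤ a + 1), max_eq_left (by omega : a ≤ a + 1)]
        rw [Nat.cast_sub ha0]
        push_cast
        field_simp
        ring
      · rw [if_neg htop]
        have han : a = n - 1 := by omega
        simp only [mEnt, min_self, max_self,
          min_eq_left (by omega : a - 1 ≤ a), max_eq_right (by omega : a - 1 ≤ a)]
        rw [Nat.cast_sub ha0]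
        have hcast : ((a : ℚ)) = (n : ℚ) - 1 := by
          subst han; rw [Nat.cast_sub (by omega)]; push_cast; ring
        rw [hcast]
        field_simp
        ring
    · have : a = 0 := by omega
      subst this
      rw [if_neg (by omega), if_pos (by omega)]
      simp only [mEnt, min_self, max_self,
        min_eq_right (by omega : 0 ≤ 0 + 1), max_eq_left (by omega : 0 ≤ 0 + 1)]
      push_cast
      field_simp
      ring
  · -- a > c
    rw [if_pos (by omega : 1 ≤ a)]
    by_cases htop : a + 1 < n
    · rw [if_pos htop, if_neg (by omega : ¬ a = c)]
      simp only [mEnt, min_eq_right (by omega : c ≤ a), max_eq_left (by omega : c ≤ a),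
        min_eq_right (by omega : c ≤ a - 1), max_eq_left (by omega : c ≤ a - 1),
        min_eq_right (by omega : c ≤ a + 1), max_eq_left (by omega : c ≤ a + 1)]
      rw [Nat.cast_sub (by omega : 1 ≤ a)]
      push_cast
      field_simp
      ring
    · rw [if_neg htop, if_neg (by omega : ¬ a = c)]
      have han : a = n - 1 := by omega
      simp only [mEnt, min_eq_right (by omega : c ≤ a), max_eq_left (by omega : c ≤ a),
        min_eq_right (by omega : c ≤ a - 1), max_eq_left (by omega : c ≤ a - 1)]
      rw [Nat.cast_sub (by omega : 1 ≤ a)]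
      have hcast : ((a : ℚ)) = (n : ℚ) - 1 := by
        subst han; rw [Nat.cast_sub (by omega)]; push_cast; ring
      rw [hcast]
      field_simp
      ring

lemma cartan_mul_Minv (n : ℕ) (hn : 2 ≤ n) : cartan n * Minv n = 1 := by
  ext i k
  rw [Matrix.mul_apply]
  have hsplit : ∀ j : Fin n, cartan n i j * Minv n j k =
      (if i = j then (2:ℚ) else 0) * Minv n j k
      + (if (j:ℕ) + 1 = (i:ℕ) then (-1:ℚ) else 0) * Minv n j k
      + (if (i:ℕ) + 1 = (j:ℕ) then (-1:ℚ) else 0) * Minv n j k := by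
    intro j
    have hij : (i = j) ↔ ((i:ℕ) = (j:ℕ)) := Fin.ext_iff
    simp only [cartan, Matrix.of_apply]
    by_cases h1 : i = j
    · have h1' : (i:ℕ) = (j:ℕ) := hij.mp h1
      rw [if_pos h1, if_pos h1, if_neg (by omega), if_neg (by omega)]
      ring
    · have h1' : ¬ (i:ℕ) = (j:ℕ) := fun h => h1 (Fin.ext h)
      rw [if_neg h1, if_neg h1]
      by_cases h2 : (j:ℕ) + 1 = (i:ℕ)
      · rw [if_pos h2, if_pos (by
          have : ((i : Fin n) : ℤ) = ((i:ℕ) : ℤ) := rfl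
          omega), if_neg (by omega)]
        ring
      · rw [if_neg h2]
        by_cases h3 : (i:ℕ) + 1 = (j:ℕ)
        · rw [if_pos h3, if_pos (by omega)]
          ring
        · rw [if_neg h3, if_neg (by omega)]
          ring
  rw [Finset.sum_congr rfl (fun j _ => hsplit j)]
  rw [Finset.sum_add_distrib, Finset.sum_add_distrib]
  have S1 : ∑ j : Fin n, (if i = j then (2:ℚ) else 0) * Minv n j k
      = 2 * Minv n i k := by
    rw [Finset.sum_eq_single i]
    · rw [if_pos rfl]
    · intro j _ hne
      rw [if_neg (fun h => hne h.symm), zero_mul]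
    · intro h; exact absurd (Finset.mem_univ i) h
  have S2 : ∑ j : Fin n, (if (j:ℕ) + 1 = (i:ℕ) then (-1:ℚ) else 0) * Minv n j k
      = -(if 1 ≤ (i:ℕ) then mEnt n ((i:ℕ) - 1) (k:ℕ) else 0) := by
    by_cases hi0 : 1 ≤ (i:ℕ)
    · rw [if_pos hi0]
      rw [Finset.sum_eq_single (⟨(i:ℕ) - 1, by omega⟩ : Fin n)]
      · rw [if_pos (by simp; omega)]
        simp [Minv]
      · intro j _ hne
        rw [if_neg (by
          intro h
          exact hne (Fin.ext (by simp; omega))), zero_mul]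
      · intro h; exact absurd (Finset.mem_univ _) h
    · rw [if_neg hi0]
      rw [Finset.sum_eq_zero, neg_zero]
      intro j _
      rw [if_neg (by omega), zero_mul]
  have S3 : ∑ j : Fin n, (if (i:ℕ) + 1 = (j:ℕ) then (-1:ℚ) else 0) * Minv n j k
      = -(if (i:ℕ) + 1 < n then mEnt n ((i:ℕ) + 1) (k:ℕ) else 0) := by
    by_cases hi0 : (i:ℕ) + 1 < n
    · rw [if_pos hi0]
      rw [Finset.sum_eq_single (⟨(i:ℕ) + 1, hi0⟩ : Fin n)]
      · rw [if_pos (by simp)]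
        simp [Minv]
      · intro j _ hne
        rw [if_neg (by
          intro h
          exact hne (Fin.ext (by simp; omega))), zero_mul]
      · intro h; exact absurd (Finset.mem_univ _) h
    · rw [if_neg hi0]
      rw [Finset.sum_eq_zero, neg_zero]
      intro j _
      have : (j:ℕ) < n := j.isLt
      rw [if_neg (by omega), zero_mul]
  rw [S1, S2, S3]
  have hkey := keyid n (i:ℕ) (k:ℕ) hn i.isLt k.isLt
  have hone : (1 : Matrix (Fin n) (Fin n) ℚ) i k = if (i:ℕ) = (k:ℕ) then 1 else 0 := by
    simp [Matrix.one_apply, Fin.ext_iff]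
  rw [hone, ← hkey]
  simp only [Minv, Matrix.of_apply]
  ring

lemma mEnt_off_ge (n a c : ℕ) (ha : a < n) (hc : c < n) :
    1 / ((n:ℚ) + 1) ≤ mEnt n a c := by
  have h1 : ((max a c : ℕ) : ℚ) + 1 ≤ (n : ℚ) := by
    have : max a c + 1 ≤ n := by omega
    exact_mod_cast this
  have h0 : (0:ℚ) ≤ ((min a c : ℕ) : ℚ) := by positivity
  have hnum : (1:ℚ) ≤ (((min a c : ℕ) : ℚ) + 1) * ((n : ℚ) - ((max a c : ℕ) : ℚ)) := by
    nlinarith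
  rw [mEnt]
  gcongr

lemma mEnt_nonneg (n a c : ℕ) (ha : a < n) (hc : c < n) : 0 ≤ mEnt n a c := by
  have := mEnt_off_ge n a c ha hc
  have : (0:ℚ) < 1 / ((n:ℚ)+1) := by positivity
  linarith [mEnt_off_ge n a c ha hc]

lemma mEnt_diag_ge (n a : ℕ) (ha : a < n) :
    (n : ℚ) / ((n:ℚ) + 1) ≤ mEnt n a a := by
  have h1 : ((a : ℚ)) + 1 ≤ (n : ℚ) := by exact_mod_cast ha
  have h0 : (0:ℚ) ≤ (a : ℚ) := by positivity
  have hnum : (n:ℚ) ≤ ((a:ℚ) + 1) * ((n : ℚ) - (a : ℚ)) := by nlinarith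
  rw [mEnt, min_self, max_self]
  gcongr

lemma mEnt_diag_big (n a : ℕ) (hn : 8 ≤ n) (h2 : 2 ≤ a) (h3 : a + 3 ≤ n) :
    (2 : ℚ) ≤ mEnt n a a := by
  have hq2 : (2:ℚ) ≤ (a:ℚ) := by exact_mod_cast h2
  have hq3 : ((a:ℚ)) + 3 ≤ (n:ℚ) := by exact_mod_cast h3
  have hq8 : (8:ℚ) ≤ (n:ℚ) := by exact_mod_cast hn
  have hnum : 2 * ((n:ℚ) + 1) ≤ ((a:ℚ) + 1) * ((n : ℚ) - (a : ℚ)) := by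
    nlinarith [mul_nonneg (by linarith : (0:ℚ) ≤ (a:ℚ) - 2) (by linarith : (0:ℚ) ≤ (n:ℚ) - 3 - (a:ℚ))]
  rw [mEnt, min_self, max_self, le_div_iff₀ (by positivity)]
  linarith

/-- For `n ≥ 8`, a nonzero vector `β` with nonnegative integer entries such
that `βᵀ Cₙ⁻¹ β < 2` must be a standard basis vector `e_i` with classical index
`i ∈ {1, 2, n-1, n}` (i.e. `Fin` index in `{0, 1, n-2, n-1}`); moreover the
value `βᵀ Cₙ⁻¹ β` is `n/(n+1)` in the first and last case and `(2n-2)/(n+1)`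
in the middle two cases. -/
theorem small_inverse_value (n : ℕ) (hn : 8 ≤ n) (β : Fin n → ℤ) (hβ : β ≠ 0)
    (hpos : ∀ i, 0 ≤ β i)
    (hlt : dotProduct (fun i => (β i : ℚ))
        ((cartan n)⁻¹.mulVec fun i => (β i : ℚ)) < 2) :
    ∃ i : Fin n,
      β = (fun j => if j = i then 1 else 0) ∧
      ((i : ℕ) = 0 ∨ (i : ℕ) = 1 ∨ (i : ℕ) = n - 2 ∨ (i : ℕ) = n - 1) ∧
      (((i : ℕ) = 0 ∨ (i : ℕ) = n - 1) →
        dotProduct (fun i => (β i : ℚ))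
            ((cartan n)⁻¹.mulVec fun i => (β i : ℚ)) =
          (n : ℚ) / ((n : ℚ) + 1)) ∧
      (((i : ℕ) = 1 ∨ (i : ℕ) = n - 2) →
        dotProduct (fun i => (β i : ℚ))
            ((cartan n)⁻¹.mulVec fun i => (β i : ℚ)) =
          (2 * (n : ℚ) - 2) / ((n : ℚ) + 1)) := by
  have hn2 : 2 ≤ n := by omega
  have hinv : (cartan n)⁻¹ = Minv n := Matrix.inv_eq_right_inv (cartan_mul_Minv n hn2)
  set b : Fin n → ℚ := fun i => (β i : ℚ) with hb
  have hbnn : ∀ i, 0 ≤ b i := fun i =>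
    show (0:ℚ) ≤ ((β i : ℤ) : ℚ) by exact_mod_cast hpos i
  have hMnn : ∀ i j : Fin n, 0 ≤ Minv n i j := fun i j =>
    mEnt_nonneg n i j i.isLt j.isLt
  have hQform : dotProduct b ((cartan n)⁻¹.mulVec b)
      = ∑ i, b i * ∑ j, Minv n i j * b j := by
    rw [hinv]; rfl
  set f : Fin n → ℚ := fun i => b i * ∑ j, Minv n i j * b j with hf
  have hfnn : ∀ i, 0 ≤ f i := fun i =>
    mul_nonneg (hbnn i) (Finset.sum_nonneg fun j _ => mul_nonneg (hMnn i j) (hbnn j))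
  have hsum : (∑ i, f i) < 2 := by rw [← hQform]; exact hlt
  -- single-term lower bound
  have hsingle : ∀ i : Fin n, b i * (Minv n i i * b i) ≤ ∑ x, f x := by
    intro i
    have h1 : Minv n i i * b i ≤ ∑ j, Minv n i j * b j :=
      Finset.single_le_sum (fun j _ => mul_nonneg (hMnn i j) (hbnn j)) (Finset.mem_univ i)
    have h2 : b i * (Minv n i i * b i) ≤ f i :=
      mul_le_mul_of_nonneg_left h1 (hbnn i)
    exact h2.trans (Finset.single_le_sum (fun j _ => hfnn j) (Finset.mem_univ i))
  -- pair lower bound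
  have hpair : ∀ i j : Fin n, i ≠ j →
      b i * (Minv n i i * b i + Minv n i j * b j)
      + b j * (Minv n j i * b i + Minv n j j * b j) ≤ ∑ x, f x := by
    intro i j hne
    have hinner : ∀ k : Fin n, Minv n k i * b i + Minv n k j * b j ≤ ∑ x, Minv n k x * b x := by
      intro k
      have := Finset.sum_le_sum_of_subset_of_nonneg
        (Finset.subset_univ ({i, j} : Finset (Fin n)))
        (fun x _ _ => mul_nonneg (hMnn k x) (hbnn x))
      rwa [Finset.sum_pair hne] at this
    have h1 : b i * (Minv n i i * b i + Minv n i j * b j) ≤ f i :=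
      mul_le_mul_of_nonneg_left (hinner i) (hbnn i)
    have h2 : b j * (Minv n j i * b i + Minv n j j * b j) ≤ f j :=
      mul_le_mul_of_nonneg_left (hinner j) (hbnn j)
    have h3 : f i + f j ≤ ∑ x, f x := by
      have := Finset.sum_le_sum_of_subset_of_nonneg
        (Finset.subset_univ ({i, j} : Finset (Fin n)))
        (fun x _ _ => hfnn x)
      rwa [Finset.sum_pair hne] at this
    linarith
  have hq8 : (8:ℚ) ≤ (n:ℚ) := by exact_mod_cast hn
  have hhalf : ∀ i : Fin n, (1:ℚ)/2 ≤ Minv n i i := by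
    intro i
    have h := mEnt_diag_ge n i i.isLt
    have : (1:ℚ)/2 ≤ (n:ℚ)/((n:ℚ)+1) := by
      rw [div_le_div_iff₀ (by norm_num) (by positivity)]
      linarith
    exact this.trans h
  by_cases hcase2 : ∃ i, 2 ≤ β i
  · exfalso
    obtain ⟨i, hi⟩ := hcase2
    have h2 : (2:ℚ) ≤ b i := show (2:ℚ) ≤ ((β i : ℤ) : ℚ) by exact_mod_cast hi
    have hd := hhalf i
    have hbb : (4:ℚ) ≤ b i * b i := by nlinarith
    have : (2:ℚ) ≤ b i * (Minv n i i * b i) := by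
      calc (2:ℚ) = 1/2 * 4 := by norm_num
        _ ≤ Minv n i i * (b i * b i) :=
            mul_le_mul hd hbb (by norm_num) ((by linarith : (0:ℚ) ≤ 1/2).trans hd)
        _ = b i * (Minv n i i * b i) := by ring
    linarith [hsingle i]
  by_cases hcase3 : ∃ i j : Fin n, i ≠ j ∧ 1 ≤ β i ∧ 1 ≤ β j
  · exfalso
    obtain ⟨i, j, hne, hi, hj⟩ := hcase3
    have h1i : (1:ℚ) ≤ b i := show (1:ℚ) ≤ ((β i : ℤ) : ℚ) by exact_mod_cast hi
    have h1j : (1:ℚ) ≤ b j := show (1:ℚ) ≤ ((β j : ℤ) : ℚ) by exact_mod_cast hj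
    have hdii : (n:ℚ)/((n:ℚ)+1) ≤ Minv n i i := mEnt_diag_ge n i i.isLt
    have hdjj : (n:ℚ)/((n:ℚ)+1) ≤ Minv n j j := mEnt_diag_ge n j j.isLt
    have hoij : 1/((n:ℚ)+1) ≤ Minv n i j := mEnt_off_ge n i j i.isLt j.isLt
    have hoji : 1/((n:ℚ)+1) ≤ Minv n j i := mEnt_off_ge n j i j.isLt i.isLt
    set q : ℚ := (n:ℚ)/((n:ℚ)+1) with hqdef
    set r : ℚ := 1/((n:ℚ)+1) with hrdef
    have hqr : 2 * q + 2 * r = 2 := by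
      rw [hqdef, hrdef]; field_simp
    have hq0 : (0:ℚ) ≤ q := by positivity
    have hr0 : (0:ℚ) ≤ r := by positivity
    have step : ∀ (k l : Fin n) (s : ℚ), s ≤ Minv n k l → (1:ℚ) ≤ b k → (1:ℚ) ≤ b l →
        s ≤ b k * (Minv n k l * b l) := by
      intro k l s hs hk hl
      have h1 : Minv n k l ≤ Minv n k l * b l := le_mul_of_one_le_right (hMnn k l) hl
      have h2 : Minv n k l * b l ≤ b k * (Minv n k l * b l) :=
        le_mul_of_one_le_left (mul_nonneg (hMnn k l) (hbnn l)) hk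
      linarith
    have t1 := step i i q hdii h1i h1i
    have t2 := step i j r hoij h1i h1j
    have t3 := step j i r hoji h1j h1i
    have t4 := step j j q hdjj h1j h1j
    have := hpair i j hne
    linarith
  -- remaining case: β is a standard basis vector
  push_neg at hcase2 hcase3
  obtain ⟨i0, hi0⟩ : ∃ i, β i ≠ 0 := Function.ne_iff.mp hβ
  have hone : β i0 = 1 := by have := hcase2 i0; have := hpos i0; omega
  have hz : ∀ j, j ≠ i0 → β j = 0 := by
    intro j hj
    have h3 := hcase3 i0 j (fun h => hj h.symm)
    have := hpos j
    omega
  have hbeq : b = fun j => if j = i0 then (1:ℚ) else 0 := by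
    funext j
    by_cases h : j = i0
    · subst h; simp [hb, hone]
    · simp [hb, h, hz j h]
  have hQval : dotProduct b ((cartan n)⁻¹.mulVec b) = mEnt n (i0:ℕ) (i0:ℕ) := by
    rw [hQform]
    show (∑ i, b i * ∑ j, Minv n i j * b j) = _
    simp only [hbeq]
    simp only [mul_ite, ite_mul, one_mul, mul_one, mul_zero, zero_mul]
    rw [Finset.sum_eq_single i0]
    · rw [if_pos rfl, Finset.sum_eq_single i0]
      · rw [if_pos rfl]; rfl
      · intro j _ hne; rw [if_neg hne]
      · intro h; exact absurd (Finset.mem_univ i0) h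
    · intro j _ hne; rw [if_neg hne]
    · intro h; exact absurd (Finset.mem_univ i0) h
  have hlt' : mEnt n (i0:ℕ) (i0:ℕ) < 2 := by rw [← hQval]; exact hlt
  have hnotmid : ¬(2 ≤ (i0:ℕ) ∧ (i0:ℕ) + 3 ≤ n) := by
    rintro ⟨h2, h3⟩
    exact absurd hlt' (not_lt.mpr (mEnt_diag_big n (i0:ℕ) hn h2 h3))
  have hval : (i0:ℕ) = 0 ∨ (i0:ℕ) = 1 ∨ (i0:ℕ) = n - 2 ∨ (i0:ℕ) = n - 1 := by
    have := i0.isLt; omega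
  refine ⟨i0, ?_, hval, ?_, ?_⟩
  · funext j
    by_cases h : j = i0
    · subst h; simp [hone]
    · simp [h, hz j h]
  · intro h
    rw [hQval]
    rcases h with h | h
    · rw [h]
      simp only [mEnt, min_self, max_self, Nat.cast_zero]
      norm_num
    · rw [h]
      simp only [mEnt, min_self, max_self]
      rw [Nat.cast_sub (by omega : 1 ≤ n)]
      have hne : (n:ℚ) + 1 ≠ 0 := by positivity
      field_simp
      push_cast; ring
  · intro h
    rw [hQval]
    rcases h with h | h
    · rw [h]
      simp only [mEnt, min_self, max_self, Nat.cast_one]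
      ring
    · rw [h]
      simp only [mEnt, min_self, max_self]
      rw [Nat.cast_sub (by omega : 2 ≤ n)]
      have hne : (n:ℚ) + 1 ≠ 0 := by positivity
      field_simp
      ring
end

section
/- Let Cₙ be the n×n Cartan matrix of type Aₙ, e ∈ ℚⁿ the vector whose i-th entry is i/(n+1), {v} the componentwise fractional part of a rational vector v, and q(k) := −{k·e}ᵀ Cₙ {k·e} for k ∈ ℤ. Then: for n = 11, q(1) = −11/12 and q(5) = −35/12; for n = 14, q(1) = −14/15, q(4) = −44/15, q(2) = −26/15 and q(7) = −56/15; for n = 15, q(2) = −7/4 and q(6) = −15/4. In particular, in each listed pair the two values differ by 2, so they are congruent modulo 2ℤ but not equal. -/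
/-- The coefficient vector of `E = (1/(n+1)) ∑ i Eᵢ`: its `i`-th entry is
`i/(n+1)` (classical index `i+1` for `i : Fin n`). -/
def EVec (n : ℕ) : Fin n → ℚ := fun i => ((i : ℚ) + 1) / ((n : ℚ) + 1)

/-- `q n k = {kE}² = -{k·e}ᵀ Cₙ {k·e}`, the self-intersection of the fractional
part of `kE` in the `Aₙ` lattice. -/
def q (n : ℕ) (k : ℤ) : ℚ :=
  -dotProduct (fun i => Int.fract ((k : ℚ) * EVec n i))
    ((cartan n).mulVec fun i => Int.fract ((k : ℚ) * EVec n i))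

set_option maxHeartbeats 2000000 in
lemma qaux0 : q 11 1 = -11/12 := by
  simp only [q, cartan, EVec, Matrix.mulVec, dotProduct, Fin.sum_univ_succ,
    Fin.sum_univ_zero, Int.fract, Matrix.of_apply]
  norm_num [Fin.ext_iff]

set_option maxHeartbeats 2000000 in
lemma qaux1 : q 11 5 = -35/12 := by
  simp only [q, cartan, EVec, Matrix.mulVec, dotProduct, Fin.sum_univ_succ,
    Fin.sum_univ_zero, Int.fract, Matrix.of_apply]
  norm_num [Fin.ext_iff]

set_option maxHeartbeats 2000000 in
lemma qaux2 : q 14 1 = -14/15 := by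
  simp only [q, cartan, EVec, Matrix.mulVec, dotProduct, Fin.sum_univ_succ,
    Fin.sum_univ_zero, Int.fract, Matrix.of_apply]
  norm_num [Fin.ext_iff]

set_option maxHeartbeats 2000000 in
lemma qaux3 : q 14 4 = -44/15 := by
  simp only [q, cartan, EVec, Matrix.mulVec, dotProduct, Fin.sum_univ_succ,
    Fin.sum_univ_zero, Int.fract, Matrix.of_apply]
  norm_num [Fin.ext_iff]

set_option maxHeartbeats 2000000 in
lemma qaux4 : q 14 2 = -26/15 := by
  simp only [q, cartan, EVec, Matrix.mulVec, dotProduct, Fin.sum_univ_succ,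
    Fin.sum_univ_zero, Int.fract, Matrix.of_apply]
  norm_num [Fin.ext_iff]

set_option maxHeartbeats 2000000 in
lemma qaux5 : q 14 7 = -56/15 := by
  simp only [q, cartan, EVec, Matrix.mulVec, dotProduct, Fin.sum_univ_succ,
    Fin.sum_univ_zero, Int.fract, Matrix.of_apply]
  norm_num [Fin.ext_iff]

set_option maxHeartbeats 2000000 in
lemma qaux6 : q 15 2 = -7/4 := by
  simp only [q, cartan, EVec, Matrix.mulVec, dotProduct, Fin.sum_univ_succ,
    Fin.sum_univ_zero, Int.fract, Matrix.of_apply]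
  norm_num [Fin.ext_iff]

set_option maxHeartbeats 2000000 in
lemma qaux7 : q 15 6 = -15/4 := by
  simp only [q, cartan, EVec, Matrix.mulVec, dotProduct, Fin.sum_univ_succ,
    Fin.sum_univ_zero, Int.fract, Matrix.of_apply]
  norm_num [Fin.ext_iff]

/-- The exceptional values for `n ∈ {11, 14, 15}`: in each pair below the two
values differ by `2`, so they are congruent modulo `2ℤ` but not equal. -/
theorem exceptional_values :
    q 11 1 = -11 / 12 ∧ q 11 5 = -35 / 12 ∧
    q 14 1 = -14 / 15 ∧ q 14 4 = -44 / 15 ∧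
    q 14 2 = -26 / 15 ∧ q 14 7 = -56 / 15 ∧
    q 15 2 = -7 / 4 ∧ q 15 6 = -15 / 4 ∧
    q 11 1 - q 11 5 = 2 ∧ q 14 1 - q 14 4 = 2 ∧
    q 14 2 - q 14 7 = 2 ∧ q 15 2 - q 15 6 = 2 := by
  refine ⟨qaux0, qaux1, qaux2, qaux3, qaux4, qaux5, qaux6, qaux7, ?_, ?_, ?_, ?_⟩ <;>
  simp [qaux0, qaux1, qaux2, qaux3, qaux4, qaux5, qaux6, qaux7] <;> norm_num
end
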